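/- arXiv:1203.2873 — 7 statements merged into one kernel-verified Lean document; each statement's English description precedes it below -/
import Mathlib

section
/- The set G_n generates the semigroup A_n: every t in A_n can be written as a composition of elements of G_n. Specifically, for any t ∈ A_n, letting k = min_{1 ≤ i ≤ n-2}(t(i) - i) - 1 and s the shift transformation s(i) = i+1 for i < n, s(n) = n, the transformation t' defined by t'(i) = t(i) - k for i ≤ n-2 and t'(n-1) = t'(n) = n lies in G_n and t = t' ∘ s^k. -/
/-- `A n` : transformations `t` of `{1,…,n}` (encoded as `Fin n`, 0-indexed) with
`t(i) > i` for all `i ∈ {1,…,n-1}` and `t(n) = n`. -/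
def A (n : ℕ) : Set (Fin n → Fin n) :=
  {t | (∀ i : Fin n, (i : ℕ) + 1 < n → (i : ℕ) < (t i : ℕ)) ∧
       (∀ i : Fin n, (i : ℕ) + 1 = n → t i = i)}

/-- `G n ⊆ A n` : transformations with `t(i) = i + 1` for some `i ∈ {1,…,n-2}`. -/
def G (n : ℕ) : Set (Fin n → Fin n) :=
  {t | t ∈ A n ∧ ∃ i : Fin n, (i : ℕ) + 2 < n ∧ (t i : ℕ) = (i : ℕ) + 1}

/-- `G n` generates `A n`: given `t ∈ A n`, with
`k = min_{1 ≤ i ≤ n-2}(t(i) - i) - 1`, the shift `s` (`s(i) = i+1` for `i < n`,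
`s(n) = n`), and `t'` given by `t'(i) = t(i) - k` for `i ≤ n-2` and
`t'(n-1) = t'(n) = n`, we have `t' ∈ G n` and `t = t' ∘ s^k`
(where `i (t' ∘ s^k) = s^k(t'(i))`). -/
theorem stmt4 (n : ℕ) (hn : 3 ≤ n) (t : Fin n → Fin n) (ht : t ∈ A n)
    (k : ℕ)
    (hk : k = sInf {m : ℕ | ∃ i : Fin n, (i : ℕ) + 2 < n ∧ m = (t i : ℕ) - (i : ℕ)} - 1)
    (s : Fin n → Fin n)
    (hs : ∀ i : Fin n, ((i : ℕ) + 1 < n → (s i : ℕ) = (i : ℕ) + 1) ∧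
          ((i : ℕ) + 1 = n → s i = i))
    (t' : Fin n → Fin n)
    (ht' : ∀ i : Fin n, ((i : ℕ) + 2 < n → (t' i : ℕ) = (t i : ℕ) - k) ∧
          (n ≤ (i : ℕ) + 2 → (t' i : ℕ) + 1 = n)) :
    t' ∈ G n ∧ t = fun i => s^[k] (t' i) := by
  set S := {m : ℕ | ∃ i : Fin n, (i : ℕ) + 2 < n ∧ m = (t i : ℕ) - (i : ℕ)} with hS
  have hnpos : 0 < n := by omega
  have h0 : (0 : ℕ) + 2 < n ∨ (0:ℕ) + 2 = n := by omega
  have hSne : S.Nonempty := by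
    refine ⟨(t ⟨0, hnpos⟩ : ℕ) - 0, ⟨0, hnpos⟩, by simp; omega, rfl⟩
  have hMmem : sInf S ∈ S := Nat.sInf_mem hSne
  set M := sInf S with hM
  obtain ⟨i₀, hi₀, hmi₀⟩ := hMmem
  have hti₀ : (i₀ : ℕ) < (t i₀ : ℕ) := ht.1 i₀ (by omega)
  have hMpos : 1 ≤ M := by omega
  have hkM : k = M - 1 := hk
  have hkM' : M = k + 1 := by omega
  -- lower bound: for every i with i+2 < n, t i - i ≥ M
  have hlb : ∀ i : Fin n, (i : ℕ) + 2 < n → (i : ℕ) + k + 1 ≤ (t i : ℕ) := by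
    intro i hi
    have : M ≤ (t i : ℕ) - (i : ℕ) := Nat.sInf_le ⟨i, hi, rfl⟩
    have := ht.1 i (by omega)
    omega
  -- values are bounded by n-1
  have hbound : ∀ j : Fin n, (j : ℕ) ≤ n - 1 := fun j => by have := j.isLt; omega
  -- t' ∈ A n
  have ht'A : t' ∈ A n := by
    constructor
    · intro i hi
      rcases lt_or_ge ((i : ℕ) + 2) n with h | h
      · have := (ht' i).1 h
        have := hlb i h
        omega
      · have := (ht' i).2 h
        omega
    · intro i hi
      have := (ht' i).2 (by omega)
      exact Fin.ext (by omega)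
  -- iterate formula
  have hiter : ∀ m : ℕ, ∀ j : Fin n, (s^[m] j : ℕ) = min ((j : ℕ) + m) (n - 1) := by
    intro m
    induction m with
    | zero => intro j; simp; have := hbound j; omega
    | succ m ih =>
      intro j
      rw [Function.iterate_succ_apply]
      rcases lt_or_ge ((j : ℕ) + 1) n with h | h
      · have hsj := (hs j).1 h
        rw [ih (s j), hsj]; omega
      · have hsj := (hs j).2 (by have := j.isLt; omega)
        rw [ih (s j), hsj]
        have := j.isLt; omega
  constructor
  · refine ⟨ht'A, i₀, hi₀, ?_⟩
    have := (ht' i₀).1 hi₀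
    omega
  · funext i
    refine Fin.ext ?_
    rw [hiter k (t' i)]
    rcases lt_or_ge ((i : ℕ) + 2) n with h | h
    · have h1 := (ht' i).1 h
      have h2 := hlb i h
      have h3 := hbound (t i)
      omega
    · have h1 := (ht' i).2 h
      have h3 := hbound (t i)
      rcases eq_or_lt_of_le h with he | hl
      · -- i + 2 = n
        have := ht.1 i (by omega)
        omega
      · -- i + 1 = n case (i = n-1)
        have hi1 : (i : ℕ) + 1 = n := by have := i.isLt; omega
        have := ht.2 i hi1
        have : (t i : ℕ) = (i : ℕ) := congrArg Fin.val this
        omega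
end

section
/- For n ≥ 4, the set G'_n of transformations t ∈ A'_n satisfying t(i) = i+1 for some i ∈ {1,...,n-3} has cardinality (n-1)! - 2·(n-2)!. -/
/-- `A' n` : transformations `t` of `{1,…,n}` (encoded as `Fin n`, 0-indexed) with
`t(i) > i` for all `1 ≤ i ≤ n-2`, `t(n-1) = n-1`, and `t(n) = n`. -/
def A' (n : ℕ) : Set (Fin n → Fin n) :=
  {t | (∀ i : Fin n, (i : ℕ) + 2 < n → (i : ℕ) < (t i : ℕ)) ∧
       (∀ i : Fin n, (i : ℕ) + 2 = n → t i = i) ∧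
       (∀ i : Fin n, (i : ℕ) + 1 = n → t i = i)}

/-- `G' n` : transformations in `A' n` with `t(i) = i+1` for some `i ∈ {1,…,n-3}`. -/
def G' (n : ℕ) : Set (Fin n → Fin n) :=
  {t | t ∈ A' n ∧ ∃ i : Fin n, (i : ℕ) + 3 < n ∧ (t i : ℕ) = (i : ℕ) + 1}

open Finset

/-- allowed values at `i` for members of `A' n` -/
def FA (n : ℕ) (i : Fin n) : Finset (Fin n) :=
  if (i : ℕ) + 2 < n then Finset.Ioi i else {i}

/-- allowed values at `i` for members of `A' n` avoiding `t i = i+1` for `i ≤ n-4` -/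
def FB (n : ℕ) (i : Fin n) : Finset (Fin n) :=
  if h : (i : ℕ) + 3 < n then Finset.Ioi (⟨(i : ℕ) + 1, by omega⟩ : Fin n)
  else FA n i

lemma mem_A_iff (n : ℕ) (t : Fin n → Fin n) :
    t ∈ A' n ↔ ∀ i, t i ∈ FA n i := by
  constructor
  · rintro ⟨h1, h2, h3⟩ i
    unfold FA
    split_ifs with h
    · rw [Finset.mem_Ioi, Fin.lt_def]
      exact h1 i h
    · have hi := i.isLt
      rw [Finset.mem_singleton]
      rcases Nat.lt_or_ge ((i : ℕ) + 1) n with h' | h'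
      · exact h2 i (by omega)
      · exact h3 i (by omega)
  · intro h
    refine ⟨fun i hi => ?_, fun i hi => ?_, fun i hi => ?_⟩
    · have := h i; unfold FA at this; rw [if_pos hi] at this
      rw [Finset.mem_Ioi, Fin.lt_def] at this
      exact this
    · have := h i; unfold FA at this; rw [if_neg (by omega)] at this
      rwa [Finset.mem_singleton] at this
    · have := h i; unfold FA at this; rw [if_neg (by omega)] at this
      rwa [Finset.mem_singleton] at this

lemma FB_subset_FA (n : ℕ) (i : Fin n) : FB n i ⊆ FA n i := by
  unfold FB
  split_ifs with h
  · unfold FA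
    rw [if_pos (by omega)]
    intro x hx
    rw [Finset.mem_Ioi, Fin.lt_def] at hx ⊢
    have : ((i : ℕ) + 1 : ℕ) < (x : ℕ) := hx
    omega
  · exact subset_rfl

lemma prod_aux (m : ℕ) : ∏ j ∈ range m, (j + 2) = (m + 1).factorial := by
  induction m with
  | zero => simp
  | succ m ih =>
      rw [prod_range_succ, ih, Nat.factorial_succ (m + 1)]
      ring

lemma prod_desc (m : ℕ) : ∏ i ∈ range m, (m + 1 - i) = (m + 1).factorial := by
  calc ∏ i ∈ range m, (m + 1 - i)
      = ∏ i ∈ range m, ((m - 1 - i) + 2) := by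
        refine prod_congr rfl fun i hi => ?_
        rw [mem_range] at hi; omega
    _ = ∏ i ∈ range m, (i + 2) := prod_range_reflect (fun j => j + 2) m
    _ = (m + 1).factorial := prod_aux m

set_option maxHeartbeats 1000000 in
/-- For `n ≥ 4`, `|G' n| = (n-1)! - 2·(n-2)!`. -/
theorem stmt7 (n : ℕ) (hn : 4 ≤ n) :
    (G' n).ncard = Nat.factorial (n - 1) - 2 * Nat.factorial (n - 2) := by
  obtain ⟨k, rfl⟩ : ∃ k, n = k + 4 := ⟨n - 4, by omega⟩
  have hGcoe : G' (k + 4) =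
      ↑(Fintype.piFinset (FA (k + 4)) \ Fintype.piFinset (FB (k + 4))) := by
    ext t
    rw [Finset.coe_sdiff, Set.mem_diff, Finset.mem_coe, Finset.mem_coe,
      Fintype.mem_piFinset, Fintype.mem_piFinset, ← mem_A_iff]
    constructor
    · rintro ⟨hA, i, hi3, hival⟩
      refine ⟨hA, fun hall => ?_⟩
      have h := hall i
      unfold FB at h
      rw [dif_pos hi3, Finset.mem_Ioi, Fin.lt_def] at h
      have h' : (i : ℕ) + 1 < (t i : ℕ) := h
      omega
    · rintro ⟨hA, hnall⟩
      refine ⟨hA, ?_⟩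
      push_neg at hnall
      obtain ⟨i, hi⟩ := hnall
      have hiA := (mem_A_iff _ t).1 hA i
      by_cases h3 : (i : ℕ) + 3 < k + 4
      · refine ⟨i, h3, ?_⟩
        unfold FB at hi
        rw [dif_pos h3, Finset.mem_Ioi, Fin.lt_def] at hi
        have hi' : ¬ ((i : ℕ) + 1 < (t i : ℕ)) := hi
        unfold FA at hiA
        rw [if_pos (by omega), Finset.mem_Ioi, Fin.lt_def] at hiA
        omega
      · exact absurd hiA (by unfold FB at hi; rwa [dif_neg h3] at hi)
  have cardFA : ∀ i : Fin (k + 4),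
      (FA (k + 4) i).card = if (i : ℕ) + 2 < k + 4 then k + 3 - (i : ℕ) else 1 := by
    intro i
    unfold FA
    split_ifs with h
    · rw [Fin.card_Ioi]; omega
    · simp
  have cardFB : ∀ i : Fin (k + 4),
      (FB (k + 4) i).card = if (i : ℕ) + 3 < k + 4 then k + 2 - (i : ℕ)
        else if (i : ℕ) + 2 < k + 4 then k + 3 - (i : ℕ) else 1 := by
    intro i
    by_cases h : (i : ℕ) + 3 < k + 4
    · rw [if_pos h]
      unfold FB
      rw [dif_pos h, Fin.card_Ioi]
      show k + 4 - 1 - ((i : ℕ) + 1) = k + 2 - (i : ℕ)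
      omega
    · rw [if_neg h]
      unfold FB
      rw [dif_neg h]
      exact cardFA i
  have hcardA : (Fintype.piFinset (FA (k + 4))).card = (k + 3).factorial := by
    rw [Fintype.card_piFinset]
    calc ∏ i : Fin (k + 4), (FA (k + 4) i).card
        = ∏ i : Fin (k + 4),
            (fun j : ℕ => if j + 2 < k + 4 then k + 3 - j else 1) (i : ℕ) :=
          Finset.prod_congr rfl fun i _ => cardFA i
      _ = ∏ i ∈ range (k + 4), (if i + 2 < k + 4 then k + 3 - i else 1) :=
          Fin.prod_univ_eq_prod_range
            (fun j : ℕ => if j + 2 < k + 4 then k + 3 - j else 1) (k + 4)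
      _ = (k + 3).factorial := by
          rw [prod_range_succ, prod_range_succ, if_neg (by omega), if_neg (by omega),
            mul_one, mul_one]
          rw [Finset.prod_congr rfl fun i hi =>
            if_pos (by rw [Finset.mem_range] at hi; omega)]
          exact prod_desc (k + 2)
  have hcardB : (Fintype.piFinset (FB (k + 4))).card = 2 * (k + 2).factorial := by
    rw [Fintype.card_piFinset]
    calc ∏ i : Fin (k + 4), (FB (k + 4) i).card
        = ∏ i : Fin (k + 4),
            (fun j : ℕ => if j + 3 < k + 4 then k + 2 - j
              else if j + 2 < k + 4 then k + 3 - j else 1) (i : ℕ) :=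
          Finset.prod_congr rfl fun i _ => cardFB i
      _ = ∏ i ∈ range (k + 4), (if i + 3 < k + 4 then k + 2 - i
            else if i + 2 < k + 4 then k + 3 - i else 1) :=
          Fin.prod_univ_eq_prod_range
            (fun j : ℕ => if j + 3 < k + 4 then k + 2 - j
              else if j + 2 < k + 4 then k + 3 - j else 1) (k + 4)
      _ = 2 * (k + 2).factorial := by
          rw [prod_range_succ, prod_range_succ, prod_range_succ]
          have e3 : (if k + 3 + 3 < k + 4 then k + 2 - (k + 3)
              else if k + 3 + 2 < k + 4 then k + 3 - (k + 3) else 1) = 1 := by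
            rw [if_neg (by omega), if_neg (by omega)]
          have e2 : (if k + 2 + 3 < k + 4 then k + 2 - (k + 2)
              else if k + 2 + 2 < k + 4 then k + 3 - (k + 2) else 1) = 1 := by
            rw [if_neg (by omega), if_neg (by omega)]
          have e1 : (if k + 1 + 3 < k + 4 then k + 2 - (k + 1)
              else if k + 1 + 2 < k + 4 then k + 3 - (k + 1) else 1) = 2 := by
            rw [if_neg (by omega), if_pos (by omega)]
            omega
          rw [e3, e2, e1, mul_one, mul_one]
          rw [Finset.prod_congr rfl fun i hi =>
            if_pos (by rw [Finset.mem_range] at hi; omega)]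
          rw [prod_desc (k + 1)]
          ring
  rw [hGcoe, Set.ncard_coe_finset,
    Finset.card_sdiff_of_subset (fun t ht => by
      rw [Fintype.mem_piFinset] at *
      exact fun i => FB_subset_FA _ i (ht i)),
    hcardA, hcardB, show k + 4 - 1 = k + 3 by omega, show k + 4 - 2 = k + 2 by omega]
end

section
/- The union B_n = ⋃_{k=1}^n B_{n,k} is closed under composition: if t_i ∈ B_{n,i} and t_j ∈ B_{n,j} with i < j, then t_i∘t_j ∈ B_{n, t_j(i)} and t_j∘t_i ∈ B_{n,i}. -/
/-- `B n k` (for `1 ≤ k ≤ n`) : transformations `t` of `{1,…,n}` (encoded as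
`Fin n`, 0-indexed; the 1-indexed value of `t i` is `(t i : ℕ) + 1`) with
`t(i) > i` for all `i < k` and `t(i) = k` for all `i ≥ k`. -/
def B (n k : ℕ) : Set (Fin n → Fin n) :=
  {t | (∀ i : Fin n, (i : ℕ) + 1 < k → (i : ℕ) < (t i : ℕ)) ∧
       (∀ i : Fin n, k ≤ (i : ℕ) + 1 → (t i : ℕ) + 1 = k)}

/-- `Bu n = ⋃_{k=1}^{n} B n k`. -/
def Bu (n : ℕ) : Set (Fin n → Fin n) :=
  {t | ∃ k, 1 ≤ k ∧ k ≤ n ∧ t ∈ B n k}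

/-- `Bu n` is closed under composition: for `tᵢ ∈ B n i`, `tⱼ ∈ B n j`, `i < j`,
`tᵢ∘tⱼ ∈ B n (tⱼ(i))` and `tⱼ∘tᵢ ∈ B n i` (composition `x(t₁∘t₂) = (x t₁) t₂`;
`tⱼ(i)` is the 1-indexed value of `tⱼ` at the state with 1-index `i`). -/
theorem stmt10 (n i j : ℕ) (hi1 : 1 ≤ i) (hij : i < j) (hjn : j ≤ n)
    (ti tj : Fin n → Fin n) (hti : ti ∈ B n i) (htj : tj ∈ B n j) :
    (∀ x : Fin n, (x : ℕ) + 1 = i → (fun y => tj (ti y)) ∈ B n ((tj x : ℕ) + 1)) ∧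
    (fun y => ti (tj y)) ∈ B n i := by
  obtain ⟨hti1, hti2⟩ := hti
  obtain ⟨htj1, htj2⟩ := htj
  constructor
  · intro x hx
    have hxj : (x : ℕ) < (tj x : ℕ) := htj1 x (by omega)
    constructor
    · intro y hy
      show (y:ℕ) < (tj (ti y) : ℕ)
      by_cases hyi : (y : ℕ) + 1 < i
      · have h1 : (y : ℕ) < (ti y : ℕ) := hti1 y hyi
        by_cases h2 : (ti y : ℕ) + 1 < j
        · have := htj1 (ti y) h2
          omega
        · have := htj2 (ti y) (by omega)
          omega
      · -- y+1 ≥ i, so ti y has index i-1 = x, hence tj (ti y) = tj x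
        have h3 : (ti y : ℕ) + 1 = i := hti2 y (by omega)
        have hxy : ti y = x := by
          apply Fin.ext
          omega
        rw [hxy]
        omega
    · intro y hy
      show (tj (ti y) : ℕ) + 1 = (tj x : ℕ) + 1
      have h3 : (ti y : ℕ) + 1 = i := hti2 y (by omega)
      have hxy : ti y = x := by
        apply Fin.ext
        omega
      simp only [hxy]
  · constructor
    · intro y hy
      show (y:ℕ) < (ti (tj y) : ℕ)
      have h1 : (y : ℕ) < (tj y : ℕ) := htj1 y (by omega)
      by_cases h2 : (tj y : ℕ) + 1 < i
      · have := hti1 (tj y) h2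
        omega
      · have := hti2 (tj y) (by omega)
        omega
    · intro y hy
      show (ti (tj y) : ℕ) + 1 = i
      by_cases h2 : (y : ℕ) + 1 < j
      · have h1 : (y : ℕ) < (tj y : ℕ) := htj1 y h2
        exact hti2 (tj y) (by omega)
      · have := htj2 y (by omega)
        exact hti2 (tj y) (by omega)
end

section
/- The cardinality of B_n = ⋃_{k=1}^n B_{n,k} is ⌊e·(n-1)!⌋, i.e., |B_n| = ∑_{k=1}^n (n-1)!/(n-k)! = ⌊e·(n-1)!⌋ for n ≥ 2. -/
open Finset in
/-- The finset of allowed values at position `i` for elements of `B n k`. -/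
def Bfin (n k : ℕ) (hn : 0 < n) : Fin n → Finset (Fin n) := fun i =>
  if (i : ℕ) + 1 < k then Finset.Ioi i else {⟨min (k - 1) (n - 1), by omega⟩}

open Finset in
lemma B_eq_piFinset (n k : ℕ) (h1 : 1 ≤ k) (hk : k ≤ n) (hn : 0 < n) :
    B n k = ↑(Fintype.piFinset (Bfin n k hn)) := by
  ext t
  simp only [Set.mem_setOf_eq, Finset.coe_sort_coe, Fintype.mem_piFinset, B,
    Set.mem_setOf_eq, Finset.mem_coe]
  constructor
  · rintro ⟨hlt, heq⟩ i
    unfold Bfin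
    split_ifs with h
    · exact Finset.mem_Ioi.2 (Fin.lt_def.2 (hlt i h))
    · have := heq i (by omega)
      simp only [Finset.mem_singleton, Fin.ext_iff]
      omega
  · intro h
    constructor
    · intro i hi
      have := h i
      unfold Bfin at this
      rw [if_pos hi] at this
      exact Fin.lt_def.1 (Finset.mem_Ioi.1 this)
    · intro i hi
      have := h i
      unfold Bfin at this
      rw [if_neg (by omega)] at this
      have := Finset.mem_singleton.1 this
      have : (t i : ℕ) = min (k - 1) (n - 1) := by rw [this]
      omega

open Finset in
lemma card_B (n k : ℕ) (h1 : 1 ≤ k) (hk : k ≤ n) (hn : 0 < n) :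
    (B n k).ncard = Nat.factorial (n - 1) / Nat.factorial (n - k) := by
  rw [B_eq_piFinset n k h1 hk hn, Set.ncard_coe_finset, Fintype.card_piFinset]
  have hcard : ∀ i : Fin n, (Bfin n k hn i).card =
      if (i : ℕ) + 1 < k then n - 1 - (i : ℕ) else 1 := by
    intro i
    unfold Bfin
    split_ifs with h
    · exact Fin.card_Ioi i
    · simp
  calc ∏ i : Fin n, (Bfin n k hn i).card
      = ∏ i ∈ Finset.range n, (if i + 1 < k then n - 1 - i else 1) := by
        rw [← Fin.prod_univ_eq_prod_range]
        exact Finset.prod_congr rfl fun i _ => hcard i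
    _ = ∏ i ∈ Finset.range (k - 1), (if i + 1 < k then n - 1 - i else 1) := by
        refine (Finset.prod_subset (Finset.range_subset_range.2 (by omega)) ?_).symm
        intro i _ hi
        rw [if_neg]
        simp only [Finset.mem_range, not_lt] at hi
        omega
    _ = ∏ i ∈ Finset.range (k - 1), (n - 1 - i) := by
        refine Finset.prod_congr rfl fun i hi => if_pos ?_
        simp only [Finset.mem_range] at hi
        omega
    _ = (n - 1).descFactorial (k - 1) := (Nat.descFactorial_eq_prod_range _ _).symm
    _ = Nat.factorial (n - 1) / Nat.factorial (n - k) := by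
        rw [Nat.descFactorial_eq_div (by omega)]
        have h2 : n - 1 - (k - 1) = n - k := by omega
        rw [h2]

/-- For `n ≥ 2`, `|Bu n| = ∑_{k=1}^n (n-1)!/(n-k)! = ⌊e·(n-1)!⌋`. -/
theorem stmt12 (n : ℕ) (hn : 2 ≤ n) :
    (Bu n).ncard = ∑ k ∈ Finset.Icc 1 n, Nat.factorial (n - 1) / Nat.factorial (n - k) ∧
    (Bu n).ncard = ⌊Real.exp 1 * (Nat.factorial (n - 1) : ℝ)⌋₊ := by
  classical
  have hn0 : 0 < n := by omega
  -- Part 1: the cardinality of the union is the sum of the cardinalities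
  have hBfin : ∀ k, (B n k : Set (Fin n → Fin n))
      = ↑(Finset.univ.filter (· ∈ B n k)) := by
    intro k; ext t; simp
  have hBu : Bu n
      = ↑((Finset.Icc 1 n).biUnion fun k => Finset.univ.filter (· ∈ B n k)) := by
    ext t
    simp only [Bu, Set.mem_setOf_eq, Finset.coe_biUnion, Set.mem_iUnion, Finset.mem_coe,
      Finset.mem_biUnion, Finset.mem_Icc, Finset.mem_filter, Finset.mem_univ, true_and]
    constructor
    · rintro ⟨k, h1, h2, h3⟩; exact ⟨k, ⟨h1, h2⟩, h3⟩
    · rintro ⟨k, ⟨h1, h2⟩, h3⟩; exact ⟨k, h1, h2, h3⟩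
  have hdisj : ∀ k ∈ Finset.Icc 1 n, ∀ l ∈ Finset.Icc 1 n, k ≠ l →
      Disjoint (Finset.univ.filter (· ∈ B n k)) (Finset.univ.filter (· ∈ B n l)) := by
    intro k hk l hl hkl
    rw [Finset.disjoint_left]
    intro t htk htl
    simp only [Finset.mem_filter, Finset.mem_univ, true_and, B, Set.mem_setOf_eq] at htk htl
    simp only [Finset.mem_Icc] at hk hl
    have e1 := htk.2 ⟨n - 1, by omega⟩ (by simpa using by omega)
    have e2 := htl.2 ⟨n - 1, by omega⟩ (by simpa using by omega)
    omega
  have hcard1 : (Bu n).ncard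
      = ∑ k ∈ Finset.Icc 1 n, Nat.factorial (n - 1) / Nat.factorial (n - k) := by
    rw [hBu, Set.ncard_coe_finset, Finset.card_biUnion hdisj]
    refine Finset.sum_congr rfl fun k hk => ?_
    simp only [Finset.mem_Icc] at hk
    rw [← Set.ncard_coe_finset, ← hBfin k]
    exact card_B n k hk.1 hk.2 hn0
  refine ⟨hcard1, ?_⟩
  rw [hcard1]
  -- Part 2: the sum equals the floor of e·(n-1)!
  have hsum2 : ∑ k ∈ Finset.Icc 1 n, Nat.factorial (n - 1) / Nat.factorial (n - k)
      = ∑ j ∈ Finset.range n, Nat.factorial (n - 1) / Nat.factorial j := by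
    refine Finset.sum_nbij' (i := fun k => n - k) (j := fun j => n - j) ?_ ?_ ?_ ?_ ?_
    · intro a ha; simp only [Finset.mem_Icc] at ha; simp only [Finset.mem_range]; omega
    · intro a ha; simp only [Finset.mem_range] at ha; simp only [Finset.mem_Icc]; omega
    · intro a ha; simp only [Finset.mem_Icc] at ha; show n - (n - a) = a; omega
    · intro a ha; simp only [Finset.mem_range] at ha; show n - (n - a) = a; omega
    · intro a _; rfl
  rw [hsum2]
  set F : ℕ := Nat.factorial (n - 1) with hF
  set S : ℕ := ∑ j ∈ Finset.range n, F / Nat.factorial j with hSdef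
  have hFpos : (0 : ℝ) < (F : ℝ) := by
    exact_mod_cast Nat.factorial_pos (n - 1)
  have hcast : ((S : ℕ) : ℝ) = ∑ j ∈ Finset.range n, (F : ℝ) / (Nat.factorial j : ℝ) := by
    rw [hSdef, Nat.cast_sum]
    refine Finset.sum_congr rfl fun j hj => ?_
    rw [Nat.cast_div (Nat.factorial_dvd_factorial (by
      simp only [Finset.mem_range] at hj; omega))
      (Nat.cast_ne_zero.2 (Nat.factorial_ne_zero j))]
  have hexp_lb : ∑ j ∈ Finset.range n, (1 : ℝ) / (Nat.factorial j : ℝ) ≤ Real.exp 1 := by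
    have := Real.sum_le_exp_of_nonneg (x := 1) zero_le_one n
    simpa [one_pow] using this
  have hexp_ub : Real.exp 1 ≤ (∑ j ∈ Finset.range n, (1 : ℝ) / (Nat.factorial j : ℝ))
      + ((n : ℝ) + 1) / ((Nat.factorial n : ℝ) * n) := by
    have := Real.exp_bound' zero_le_one le_rfl hn0
    simpa [one_pow] using this
  have hnf : (Nat.factorial n : ℝ) = (n : ℝ) * (F : ℝ) := by
    have h1 : n - 1 + 1 = n := by omega
    have : Nat.factorial n = n * F := by
      calc Nat.factorial n = Nat.factorial (n - 1 + 1) := by rw [h1]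
        _ = (n - 1 + 1) * Nat.factorial (n - 1) := Nat.factorial_succ _
        _ = n * F := by rw [h1, hF]
    exact_mod_cast this
  have hS' : (∑ j ∈ Finset.range n, (1 : ℝ) / (Nat.factorial j : ℝ)) * (F : ℝ)
      = ∑ j ∈ Finset.range n, (F : ℝ) / (Nat.factorial j : ℝ) := by
    rw [Finset.sum_mul]
    exact Finset.sum_congr rfl fun j _ => by ring
  have htail : ((n : ℝ) + 1) / ((Nat.factorial n : ℝ) * n) * (F : ℝ) < 1 := by
    rw [hnf, div_mul_eq_mul_div, div_lt_one (by positivity)]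
    have h2 : (2 : ℝ) ≤ (n : ℝ) := by exact_mod_cast hn
    nlinarith [hFpos]
  symm
  rw [Nat.floor_eq_iff (by positivity)]
  constructor
  · rw [hcast, ← hS']
    exact mul_le_mul_of_nonneg_right hexp_lb hFpos.le
  · have hmul := mul_le_mul_of_nonneg_right hexp_ub hFpos.le
    rw [add_mul, hS'] at hmul
    rw [hcast]
    linarith [htail]
end

section
/- For n ≥ 2, ∑_{l=0}^{n-1} (n-1)!/(n-1-l)! = ⌊e·(n-1)!⌋. -/
/-!
Reversing the order of summation, the left side is `∑_{k ≤ m} m!/k!` with `m = n - 1`, an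
integer equal to `m! · ∑_{k ≤ m} 1/k!`. The rest of `e · m!` is the tail `m! · ∑_{k > m} 1/k!`,
which is positive and, by the standard remainder bound for the exponential series, less than
`(m + 2)/(m + 1)² < 1` as soon as `m ≥ 1`.
-/

open Finset Real Nat

lemma sum_factorial_div_factorial_sub (m : ℕ) :
    ∑ l ∈ range (m + 1), m ! / (m - l)! = ∑ k ∈ range (m + 1), m ! / k ! := by
  rw [← sum_range_reflect]
  refine sum_congr rfl fun k hk => ?_
  rw [mem_range] at hk
  rw [show m - (m + 1 - 1 - k) = k by omega]

lemma cast_sum_factorial_div_factorial (m : ℕ) :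
    ((∑ k ∈ range (m + 1), m ! / k ! : ℕ) : ℝ) = m ! * ∑ k ∈ range (m + 1), (k ! : ℝ)⁻¹ := by
  rw [mul_sum, cast_sum]
  refine sum_congr rfl fun k hk => ?_
  rw [Nat.cast_div (factorial_dvd_factorial (by simpa [Nat.lt_succ_iff] using hk))
    (by positivity), div_eq_mul_inv]

lemma sum_inv_factorial_le_exp_one (n : ℕ) : ∑ k ∈ range n, (k ! : ℝ)⁻¹ ≤ exp 1 := by
  simpa using sum_le_exp_of_nonneg zero_le_one n

lemma exp_one_lt_sum_inv_factorial_add {m : ℕ} (hm : 1 ≤ m) :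
    exp 1 < ∑ k ∈ range (m + 1), (k ! : ℝ)⁻¹ + (m ! : ℝ)⁻¹ := by
  have htail : (1 : ℝ) ^ (m + 1) * ((m + 1 : ℕ) + 1) / ((m + 1)! * (m + 1 : ℕ)) < (m ! : ℝ)⁻¹ := by
    rw [one_pow, one_mul, div_lt_iff₀ (by positivity), factorial_succ]
    push_cast
    field_simp
    have : (1 : ℝ) ≤ m := by exact_mod_cast hm
    nlinarith
  calc exp 1 ≤ _ := exp_bound' zero_le_one le_rfl m.succ_pos
    _ < _ := by simpa using htail

theorem floor_exp_one_mul_factorial {m : ℕ} (hm : 1 ≤ m) :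
    ⌊exp 1 * m !⌋₊ = ∑ k ∈ range (m + 1), m ! / k ! := by
  have hfac : (0 : ℝ) < m ! := by positivity
  rw [Nat.floor_eq_iff (by positivity), cast_sum_factorial_div_factorial, mul_comm (exp 1)]
  constructor
  · exact mul_le_mul_of_nonneg_left (sum_inv_factorial_le_exp_one _) hfac.le
  · calc (m ! : ℝ) * exp 1 < m ! * (∑ k ∈ range (m + 1), (k ! : ℝ)⁻¹ + (m ! : ℝ)⁻¹) :=
          mul_lt_mul_of_pos_left (exp_one_lt_sum_inv_factorial_add hm) hfac
      _ = _ := by rw [mul_add, mul_inv_cancel₀ hfac.ne']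

/-- For `n ≥ 2`, `∑_{l=0}^{n-1} (n-1)!/(n-1-l)! = ⌊e·(n-1)!⌋`. -/
theorem stmt13 (n : ℕ) (hn : 2 ≤ n) :
    ∑ l ∈ Finset.range n, Nat.factorial (n - 1) / Nat.factorial (n - 1 - l) =
      ⌊Real.exp 1 * (Nat.factorial (n - 1) : ℝ)⌋₊ := by
  obtain ⟨m, rfl⟩ : ∃ m, n = m + 1 := ⟨n - 1, by omega⟩
  rw [Nat.add_sub_cancel, sum_factorial_div_factorial_sub, floor_exp_one_mul_factorial (by omega)]
end

section
/- Let C_n be the set of transformations t ∈ B_n with t(j) < n for all j, and α : C_n → B_n defined by α(t)(j) = t(j) + 1. Then for any t_i ∈ B_{n,i} and t_j ∈ B_{n,j} with i ≥ j, the composition t_i∘t_j lies in the image α(C_n); specifically α^{-1}(t_i∘t_j) ∈ B_{n,j-1}. -/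
/-- `C n` : transformations of `Bu n` all of whose (1-indexed) values are `< n`. -/
def C (n : ℕ) : Set (Fin n → Fin n) :=
  {t | t ∈ Bu n ∧ ∀ j : Fin n, (t j : ℕ) + 1 < n}

/-- For `tᵢ ∈ B n i`, `tⱼ ∈ B n j` with `2 ≤ j ≤ i ≤ n`, the composition
`tᵢ∘tⱼ` (i.e. `x ↦ tⱼ(tᵢ(x))`) lies in `α(C n)`, where `α` shifts all values
up by one; specifically `α⁻¹(tᵢ∘tⱼ) ∈ B n (j-1)`. -/
theorem stmt16 (n i j : ℕ) (hj : 2 ≤ j) (hji : j ≤ i) (hin : i ≤ n)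
    (ti tj : Fin n → Fin n) (hti : ti ∈ B n i) (htj : tj ∈ B n j) :
    ∃ t0 ∈ C n, t0 ∈ B n (j - 1) ∧
      ∀ x : Fin n, (tj (ti x) : ℕ) = (t0 x : ℕ) + 1 := by
  obtain ⟨hti1, hti2⟩ := hti
  obtain ⟨htj1, htj2⟩ := htj
  have hpos : ∀ y : Fin n, 1 ≤ (tj y : ℕ) := by
    intro y
    by_cases h : (y : ℕ) + 1 < j
    · have := htj1 y h; omega
    · have := htj2 y (by omega); omega
  set t0 : Fin n → Fin n := fun x =>
    ⟨(tj (ti x) : ℕ) - 1, by have := (tj (ti x)).isLt; omega⟩ with ht0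
  have ht0val : ∀ x, (t0 x : ℕ) = (tj (ti x) : ℕ) - 1 := fun x => rfl
  have key : ∀ x : Fin n, (j : ℕ) - 1 ≤ (x : ℕ) + 1 → (tj (ti x) : ℕ) + 1 = j := by
    intro x hx
    by_cases h : (x : ℕ) + 1 < i
    · have h1 := hti1 x h
      exact htj2 (ti x) (by omega)
    · have h1 := hti2 x (by omega)
      exact htj2 (ti x) (by omega)
  have hB : t0 ∈ B n (j - 1) := by
    constructor
    · intro x hx
      rw [ht0val]
      by_cases h : (ti x : ℕ) + 1 < j
      · have h1 := hti1 x (by omega)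
        have h2 := htj1 (ti x) h
        omega
      · have h2 := htj2 (ti x) (by omega)
        omega
    · intro x hx
      have := key x hx
      rw [ht0val]; omega
  refine ⟨t0, ⟨⟨j - 1, by omega, by omega, hB⟩, ?_⟩, hB, ?_⟩
  · intro x
    rw [ht0val]
    have := hpos (ti x)
    have := (tj (ti x)).isLt
    omega
  · intro x
    rw [ht0val]
    have := hpos (ti x)
    omega
end

section
/- For 1 ≤ k ≤ n-1, the cardinality of B_{n,k} ∩ C_n is (n-2)!/(n-1-k)!, and consequently |C_n| = ∑_{k=1}^{n-1} (n-2)!/(n-1-k)! = ⌊e·(n-2)!⌋ for n ≥ 3. -/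
open Finset


def Sfin (n k : ℕ) : Fin n → Finset (Fin n) := fun i =>
  if (i : ℕ) + 1 < k then univ.filter (fun x : Fin n => (i : ℕ) < (x : ℕ) ∧ (x : ℕ) + 1 < n)
  else univ.filter (fun x : Fin n => (x : ℕ) + 1 = k)

lemma mem_piSfin {n k : ℕ} (t : Fin n → Fin n) :
    t ∈ Fintype.piFinset (Sfin n k) ↔
      ∀ i : Fin n, if (i : ℕ) + 1 < k then ((i : ℕ) < (t i : ℕ) ∧ (t i : ℕ) + 1 < n)
        else (t i : ℕ) + 1 = k := by
  rw [Fintype.mem_piFinset]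
  refine forall_congr' fun i => ?_
  unfold Sfin
  split <;> simp

lemma BC_eq {n k : ℕ} (hk1 : 1 ≤ k) (hk : k ≤ n - 1) :
    B n k ∩ C n = ↑(Fintype.piFinset (Sfin n k)) := by
  have hn : 2 ≤ n := by omega
  ext t
  simp only [Set.mem_inter_iff, Finset.coe_sort_coe, Finset.mem_coe, mem_piSfin]
  constructor
  · rintro ⟨⟨h1, h2⟩, _, hC⟩ i
    split
    · exact ⟨h1 i ‹_›, hC i⟩
    · exact h2 i (by omega)
  · intro h
    have h1 : ∀ i : Fin n, (i : ℕ) + 1 < k → (i : ℕ) < (t i : ℕ) := by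
      intro i hi; have := h i; rw [if_pos hi] at this; exact this.1
    have h2 : ∀ i : Fin n, k ≤ (i : ℕ) + 1 → (t i : ℕ) + 1 = k := by
      intro i hi; have := h i; rw [if_neg (by omega)] at this; exact this
    have hC : ∀ j : Fin n, (t j : ℕ) + 1 < n := by
      intro j
      have := h j
      split at this
      · exact this.2
      · omega
    exact ⟨⟨h1, h2⟩, ⟨k, hk1, by omega, h1, h2⟩, hC⟩

lemma card_piSfin {n k : ℕ} (hk1 : 1 ≤ k) (hk : k ≤ n - 1) :
    (Fintype.piFinset (Sfin n k)).card = (n - 2).descFactorial (k - 1) := by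
  have hn : 2 ≤ n := by omega
  rw [Fintype.card_piFinset]
  have hcard : ∀ i : Fin n, (Sfin n k i).card = if (i : ℕ) + 1 < k then n - 2 - (i : ℕ) else 1 := by
    intro i
    unfold Sfin
    split
    · rename_i hi
      have : (univ.filter (fun x : Fin n => (i : ℕ) < (x : ℕ) ∧ (x : ℕ) + 1 < n))
          = Finset.Ioo i ⟨n - 1, by omega⟩ := by
        ext x
        simp only [Finset.mem_filter, Finset.mem_univ, true_and, Finset.mem_Ioo, Fin.lt_def]
        omega
      rw [this, Fin.card_Ioo]
      simp
      omega
    · rw [Finset.card_eq_one]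
      refine ⟨⟨k - 1, by omega⟩, ?_⟩
      ext x
      simp [Fin.ext_iff]
      omega
  calc ∏ i : Fin n, (Sfin n k i).card
      = ∏ i ∈ Finset.range n, (if i + 1 < k then n - 2 - i else 1) := by
        rw [Finset.prod_range fun i => if i + 1 < k then n - 2 - i else 1]
        exact Finset.prod_congr rfl fun i _ => hcard i
    _ = ∏ i ∈ Finset.range (k - 1), (n - 2 - i) := by
        rw [← Finset.prod_subset (Finset.range_subset_range.2 (show k - 1 ≤ n by omega))]
        · refine Finset.prod_congr rfl fun i hi => ?_
          rw [if_pos (by simp at hi; omega)]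
        · intro i _ hi
          rw [if_neg (by simp at hi; omega)]
    _ = (n - 2).descFactorial (k - 1) := (Nat.descFactorial_eq_prod_range _ _).symm

lemma part1 {n k : ℕ} (hk1 : 1 ≤ k) (hk : k ≤ n - 1) :
    (B n k ∩ C n).ncard = Nat.factorial (n - 2) / Nat.factorial (n - 1 - k) := by
  rw [BC_eq hk1 hk, Set.ncard_coe_finset, card_piSfin hk1 hk,
    Nat.descFactorial_eq_div (by omega : k - 1 ≤ n - 2)]
  congr 2
  omega

lemma C_eq {n : ℕ} (hn : 2 ≤ n) :
    C n = ↑((Finset.Icc 1 (n - 1)).biUnion fun k => Fintype.piFinset (Sfin n k)) := by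
  rw [Finset.coe_biUnion]
  ext t
  simp only [Set.mem_iUnion, Finset.mem_coe, Finset.mem_Icc, exists_prop]
  constructor
  · rintro ht
    obtain ⟨⟨k, hk1, hkn, hB⟩, hC⟩ := ht
    have hlast : ((⟨n - 1, by omega⟩ : Fin n) : ℕ) + 1 = n := by simp; omega
    have hkn' : k ≤ n - 1 := by
      by_contra h
      have hk : k = n := by omega
      have := hB.2 ⟨n - 1, by omega⟩ (by simp; omega)
      have := hC ⟨n - 1, by omega⟩
      omega
    refine ⟨k, ⟨hk1, hkn'⟩, ?_⟩
    rw [← Finset.mem_coe, ← BC_eq hk1 hkn']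
    exact ⟨hB, ⟨k, hk1, hkn, hB⟩, hC⟩
  · rintro ⟨k, ⟨hk1, hkn⟩, ht⟩
    rw [← Finset.mem_coe, ← BC_eq hk1 hkn] at ht
    exact ht.2

lemma disj {n : ℕ} : ∀ k ∈ Finset.Icc 1 (n - 1), ∀ l ∈ Finset.Icc 1 (n - 1), k ≠ l →
    Disjoint (Fintype.piFinset (Sfin n k)) (Fintype.piFinset (Sfin n l)) := by
  intro k hk l hl hkl
  simp only [Finset.mem_Icc] at hk hl
  rw [Finset.disjoint_left]
  intro t htk htl
  have hn : 1 ≤ n := by omega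
  have h1 := (mem_piSfin t).1 htk ⟨n - 1, by omega⟩
  have h2 := (mem_piSfin t).1 htl ⟨n - 1, by omega⟩
  rw [if_neg (by simp; omega)] at h1
  rw [if_neg (by simp; omega)] at h2
  omega

-- tail bound : (m+1+i)! ≥ m! * 2^(i+1) for m ≥ 1
lemma fact_ge {m : ℕ} (hm : 1 ≤ m) : ∀ i : ℕ, m.factorial * 2 ^ (i + 1) ≤ (m + 1 + i).factorial := by
  intro i
  induction i with
  | zero =>
    simp [Nat.factorial_succ]
    nlinarith [Nat.one_le_iff_ne_zero.2 (Nat.factorial_ne_zero m)]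
  | succ i ih =>
    have : (m + 1 + (i + 1)).factorial = (m + i + 2) * (m + 1 + i).factorial := by
      rw [show m + 1 + (i + 1) = (m + 1 + i) + 1 by ring, Nat.factorial_succ]
      congr 1
      omega
    rw [this, pow_succ]
    calc m.factorial * (2 ^ (i + 1) * 2) = 2 * (m.factorial * 2 ^ (i + 1)) := by ring
    _ ≤ 2 * (m + 1 + i).factorial := by omega
    _ ≤ (m + i + 2) * (m + 1 + i).factorial := Nat.mul_le_mul_right _ (by omega)

lemma floor_exp_fact {m : ℕ} (hm : 1 ≤ m) :
    ⌊Real.exp 1 * (m.factorial : ℝ)⌋₊ = ∑ j ∈ Finset.range (m + 1), m.factorial / j.factorial := by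
  set f : ℕ → ℝ := fun j => (m.factorial : ℝ) / j.factorial with hf
  have hsum : Summable f := by
    have := (Real.summable_pow_div_factorial 1).mul_left (m.factorial : ℝ)
    refine this.congr fun j => ?_
    simp [hf, div_eq_mul_inv]
  have hexp : Real.exp 1 * (m.factorial : ℝ) = ∑' j, f j := by
    rw [Real.exp_eq_exp_ℝ, NormedSpace.exp_eq_tsum_div]
    rw [← tsum_mul_right]
    refine tsum_congr fun j => ?_
    simp [hf]
    ring
  have hsplit := Summable.sum_add_tsum_nat_add (m + 1) hsum
  set T : ℝ := ∑' i, f (i + (m + 1)) with hT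
  have hg : Summable (fun i : ℕ => (1/2 : ℝ) ^ (i + 1)) := by
    have := (summable_geometric_of_lt_one (by norm_num) (by norm_num : (1/2:ℝ) < 1)).mul_left (1/2 : ℝ)
    refine this.congr fun i => ?_
    rw [pow_succ]
    ring
  have hle : ∀ i : ℕ, f (i + (m + 1)) ≤ (1/2 : ℝ) ^ (i + 1) := by
    intro i
    have h := fact_ge hm i
    have h2 : (m.factorial : ℝ) * 2 ^ (i + 1) ≤ ((m + 1 + i).factorial : ℝ) := by
      exact_mod_cast h
    rw [hf]
    have heq : i + (m + 1) = m + 1 + i := by omega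
    simp only [heq]
    rw [div_le_iff₀ (by positivity), one_div, inv_pow, inv_mul_eq_div,
      le_div_iff₀ (by positivity)]
    exact h2
  have hlt1 : f (1 + (m + 1)) < (1/2 : ℝ) ^ (1 + 1) := by
    rw [hf]
    have h1 : ((1 + (m + 1)).factorial : ℕ) = (m + 2) * (m + 1) * m.factorial := by
      rw [show 1 + (m + 1) = (m + 1) + 1 by ring, Nat.factorial_succ, Nat.factorial_succ]
      ring
    have hfpos : (0:ℝ) < (m.factorial : ℝ) := by exact_mod_cast m.factorial_pos
    rw [div_lt_iff₀ (by positivity)]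
    have : (((1 + (m + 1)).factorial : ℕ) : ℝ) = ((m:ℝ) + 2) * ((m:ℝ) + 1) * m.factorial := by
      rw [h1]; push_cast; ring
    rw [this, show ((1:ℝ)/2)^(1+1) = 1/4 by norm_num]
    have hm' : (1:ℝ) ≤ (m:ℝ) := by exact_mod_cast hm
    have h6 : (6:ℝ) ≤ ((m:ℝ)+2)*((m:ℝ)+1) := by nlinarith
    nlinarith [mul_le_mul_of_nonneg_right h6 hfpos.le]
  have hTlt : T < 1 := by
    have := Summable.tsum_lt_tsum hle hlt1 (by exact (summable_nat_add_iff (m+1)).2 hsum) hg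
    have hgeo : ∑' i : ℕ, (1/2 : ℝ) ^ (i + 1) = 1 := by
      have : ∑' i : ℕ, (1/2 : ℝ) ^ (i + 1) = (1/2) * ∑' i : ℕ, (1/2 : ℝ) ^ i := by
        rw [← tsum_mul_left]
        refine tsum_congr fun i => ?_
        rw [pow_succ]; ring
      rw [this, tsum_geometric_of_lt_one (by norm_num) (by norm_num)]
      norm_num
    rw [hT]
    calc ∑' i, f (i + (m+1)) < ∑' i : ℕ, (1/2:ℝ)^(i+1) := this
      _ = 1 := hgeo
  have hT0 : 0 ≤ T := tsum_nonneg fun i => by positivity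
  have hcast : ((∑ j ∈ Finset.range (m + 1), m.factorial / j.factorial : ℕ) : ℝ)
      = ∑ j ∈ Finset.range (m + 1), f j := by
    push_cast
    refine Finset.sum_congr rfl fun j hj => ?_
    rw [Finset.mem_range] at hj
    rw [hf, Nat.cast_div (Nat.factorial_dvd_factorial (by omega))
      (by exact_mod_cast (Nat.factorial_pos j).ne')]
  rw [Nat.floor_eq_iff (by positivity)]
  constructor
  · rw [hcast, hexp, ← hsplit]
    linarith
  · rw [hcast, hexp, ← hsplit]
    linarith

/-- For `1 ≤ k ≤ n-1`, `|B n k ∩ C n| = (n-2)!/(n-1-k)!`, and consequently, for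
`n ≥ 3`, `|C n| = ∑_{k=1}^{n-1} (n-2)!/(n-1-k)! = ⌊e·(n-2)!⌋`. -/
theorem stmt17 (n : ℕ) :
    (∀ k, 1 ≤ k → k ≤ n - 1 →
      (B n k ∩ C n).ncard = Nat.factorial (n - 2) / Nat.factorial (n - 1 - k)) ∧
    (3 ≤ n →
      (C n).ncard = ∑ k ∈ Finset.Icc 1 (n - 1),
          Nat.factorial (n - 2) / Nat.factorial (n - 1 - k) ∧
      (C n).ncard = ⌊Real.exp 1 * (Nat.factorial (n - 2) : ℝ)⌋₊) := by
  constructor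
  · exact fun k hk1 hk => part1 hk1 hk
  · intro hn
    have h1 : (C n).ncard = ∑ k ∈ Finset.Icc 1 (n - 1),
        Nat.factorial (n - 2) / Nat.factorial (n - 1 - k) := by
      rw [C_eq (by omega), Set.ncard_coe_finset, Finset.card_biUnion disj]
      refine Finset.sum_congr rfl fun k hk => ?_
      simp only [Finset.mem_Icc] at hk
      rw [card_piSfin hk.1 hk.2, Nat.descFactorial_eq_div (by omega : k - 1 ≤ n - 2)]
      congr 2
      omega
    refine ⟨h1, ?_⟩
    rw [h1, floor_exp_fact (show 1 ≤ n - 2 by omega)]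
    refine Finset.sum_nbij' (fun k => n - 1 - k) (fun j => n - 1 - j) ?_ ?_ ?_ ?_ ?_ <;>
      intros <;> simp_all <;> omega
end
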